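/- arXiv:2503.10585 — 2 statements merged into one kernel-verified Lean document; each statement's English description precedes it below -/
import Mathlib

section
/- Let n ≥ 1, let A be an n×n real sub-generator matrix and α ∈ ℝⁿ a probability vector. The function μ ↦ τ(μ) = αᵀ (μI − A)⁻¹ ((−A)𝟙) is differentiable at every μ > 0 with derivative equal to −αᵀ ((μI − A)⁻¹)² ((−A)𝟙); this derivative is nonpositive, and consequently τ is antitone (nonincreasing) on (0, ∞). -/
/-!
Write `R μ = (μI − A)⁻¹`. A minimum principle shows that `μI − A` is inverse-positive for `μ > 0`:
at a minimal coordinate `k` of `x`, the off-diagonal signs and the row-sum bound give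
`((μI − A) x)ₖ ≤ xₖ (μ − ∑ⱼ Aₖⱼ)`, so `(μI − A) x ≥ 0` forces `x ≥ 0`. Since `μ ↦ R μ` is the
resolvent of `A`, its derivative is `−R μ²`, and `τ'(μ) = −αᵀ R μ (R μ ((−A)𝟙))` is nonpositive
because `α`, `(−A)𝟙` and `R μ` are all nonnegative.
-/

open Matrix

namespace Matrix

variable {ι : Type*} [Fintype ι]

def IsSubGenerator (A : Matrix ι ι ℝ) : Prop :=
  (∀ i j, i ≠ j → 0 ≤ A i j) ∧ ∀ i, ∑ j, A i j ≤ 0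

namespace IsSubGenerator

variable [DecidableEq ι] {A : Matrix ι ι ℝ} (hA : A.IsSubGenerator) {μ : ℝ} (hμ : 0 < μ)
include hA hμ

theorem nonneg_of_smul_one_sub_mulVec_nonneg {x : ι → ℝ}
    (hx : 0 ≤ (μ • 1 - A) *ᵥ x) : 0 ≤ x := by
  intro i
  by_contra! hxi
  have : Nonempty ι := ⟨i⟩
  obtain ⟨k, hk⟩ := Finite.exists_min x
  have hxk : x k < 0 := (hk i).trans_lt hxi
  have hoff : 0 ≤ ∑ j, A k j * (x j - x k) := Finset.sum_nonneg fun j _ => by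
    rcases eq_or_ne k j with rfl | hkj
    · simp
    · exact mul_nonneg (hA.1 k j hkj) (sub_nonneg.2 (hk j))
  have hdiag : x k * (μ - ∑ j, A k j) < 0 := mul_neg_of_neg_of_pos hxk (by linarith [hA.2 k])
  have hentry : ((μ • 1 - A) *ᵥ x) k = x k * (μ - ∑ j, A k j) - ∑ j, A k j * (x j - x k) := by
    have hsum : ∑ j, A k j * (x j - x k) = ∑ j, A k j * x j - x k * ∑ j, A k j := by
      simp only [mul_sub, Finset.sum_sub_distrib, Finset.mul_sum, mul_comm]
    rw [hsum, sub_mulVec, smul_mulVec, one_mulVec]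
    simp only [Pi.sub_apply, Pi.smul_apply, smul_eq_mul, mulVec, dotProduct]
    ring
  have hxk' : 0 ≤ ((μ • 1 - A) *ᵥ x) k := hx k
  linarith

theorem isUnit_smul_one_sub : IsUnit (μ • 1 - A) := by
  refine (mulVec_injective_iff_isUnit).1 fun v w hvw => ?_
  have hkernel : (μ • 1 - A) *ᵥ (v - w) = 0 := by rw [mulVec_sub, hvw, sub_self]
  have hle : 0 ≤ v - w := hA.nonneg_of_smul_one_sub_mulVec_nonneg hμ (by rw [hkernel])
  have hge : 0 ≤ -(v - w) :=
    hA.nonneg_of_smul_one_sub_mulVec_nonneg hμ (by rw [mulVec_neg, hkernel, neg_zero])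
  exact sub_eq_zero.1 (le_antisymm (neg_nonneg.1 hge) hle)

theorem inv_mulVec_nonneg {v : ι → ℝ} (hv : 0 ≤ v) :
    0 ≤ (μ • 1 - A)⁻¹ *ᵥ v := by
  refine hA.nonneg_of_smul_one_sub_mulVec_nonneg hμ ?_
  rwa [mulVec_mulVec, mul_nonsing_inv _ ((hA.isUnit_smul_one_sub hμ).map detMonoidHom), one_mulVec]

end IsSubGenerator

theorem IsSubGenerator.neg_mulVec_one_nonneg {A : Matrix ι ι ℝ} (hA : A.IsSubGenerator) :
    0 ≤ (-A) *ᵥ 1 := fun i => by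
  simpa [neg_mulVec, mulVec, dotProduct] using hA.2 i

section Resolvent

attribute [local instance] Matrix.linftyOpNormedRing Matrix.linftyOpNormedAlgebra

variable [DecidableEq ι] {A : Matrix ι ι ℝ} {μ : ℝ}

theorem hasDerivAt_smul_one_sub_inv (h : IsUnit (μ • 1 - A)) :
    HasDerivAt (fun t : ℝ => (t • (1 : Matrix ι ι ℝ) - A)⁻¹) (-((μ • 1 - A)⁻¹ ^ 2)) μ := by
  have hμ : μ ∈ resolventSet ℝ A := by
    rwa [spectrum.mem_resolventSet_iff, Algebra.algebraMap_eq_smul_one]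
  have hres : ∀ t : ℝ, resolvent A t = (t • (1 : Matrix ι ι ℝ) - A)⁻¹ := fun t => by
    rw [nonsing_inv_eq_ringInverse, ← Algebra.algebraMap_eq_smul_one]; rfl
  have hderiv := spectrum.hasDerivAt_resolvent_const_left hμ
  rw [funext hres] at hderiv
  exact hderiv

theorem hasDerivAt_dotProduct_smul_one_sub_inv_mulVec (α w : ι → ℝ) (h : IsUnit (μ • 1 - A)) :
    HasDerivAt (fun t : ℝ => α ⬝ᵥ ((t • (1 : Matrix ι ι ℝ) - A)⁻¹ *ᵥ w))
      (-(α ⬝ᵥ (((μ • 1 - A)⁻¹ ^ 2) *ᵥ w))) μ := by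
  let L : Matrix ι ι ℝ →L[ℝ] ℝ := LinearMap.toContinuousLinearMap
    { toFun := fun M => α ⬝ᵥ (M *ᵥ w)
      map_add' := fun M N => by rw [add_mulVec, dotProduct_add]
      map_smul' := fun c M => by rw [smul_mulVec, dotProduct_smul]; rfl }
  have hL : L (-((μ • 1 - A)⁻¹ ^ 2)) = -(α ⬝ᵥ (((μ • 1 - A)⁻¹ ^ 2) *ᵥ w)) := by
    simp only [L, LinearMap.coe_toContinuousLinearMap', LinearMap.coe_mk, AddHom.coe_mk,
      neg_mulVec, dotProduct_neg]
  exact hL ▸ L.hasFDerivAt.comp_hasDerivAt μ (hasDerivAt_smul_one_sub_inv h)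

end Resolvent

end Matrix

theorem tau_hasDerivAt_and_antitoneOn_general
    (n : ℕ) (A : Matrix (Fin n) (Fin n) ℝ)
    (hoff : ∀ i j, i ≠ j → 0 ≤ A i j)
    (hrow : ∀ i, ∑ j, A i j ≤ 0)
    (α : Fin n → ℝ) (hα0 : ∀ i, 0 ≤ α i) :
    (∀ μ : ℝ, 0 < μ →
      HasDerivAt
        (fun t : ℝ => α ⬝ᵥ ((t • (1 : Matrix (Fin n) (Fin n) ℝ) - A)⁻¹ *ᵥ ((-A) *ᵥ (1 : Fin n → ℝ))))
        (-(α ⬝ᵥ ((((μ • (1 : Matrix (Fin n) (Fin n) ℝ) - A)⁻¹) ^ 2) *ᵥ ((-A) *ᵥ (1 : Fin n → ℝ))))) μ ∧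
      -(α ⬝ᵥ ((((μ • (1 : Matrix (Fin n) (Fin n) ℝ) - A)⁻¹) ^ 2) *ᵥ ((-A) *ᵥ (1 : Fin n → ℝ)))) ≤ 0) ∧
    AntitoneOn
      (fun μ : ℝ => α ⬝ᵥ ((μ • (1 : Matrix (Fin n) (Fin n) ℝ) - A)⁻¹ *ᵥ ((-A) *ᵥ (1 : Fin n → ℝ))))
      (Set.Ioi (0 : ℝ)) := by
  have hA : A.IsSubGenerator := ⟨hoff, hrow⟩
  have hderiv : ∀ μ : ℝ, 0 < μ → HasDerivAt
      (fun t : ℝ => α ⬝ᵥ ((t • (1 : Matrix (Fin n) (Fin n) ℝ) - A)⁻¹ *ᵥ ((-A) *ᵥ 1)))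
      (-(α ⬝ᵥ (((μ • (1 : Matrix (Fin n) (Fin n) ℝ) - A)⁻¹ ^ 2) *ᵥ ((-A) *ᵥ 1)))) μ :=
    fun μ hμ => hasDerivAt_dotProduct_smul_one_sub_inv_mulVec α _ (hA.isUnit_smul_one_sub hμ)
  have hnonpos : ∀ μ : ℝ, 0 < μ →
      -(α ⬝ᵥ (((μ • (1 : Matrix (Fin n) (Fin n) ℝ) - A)⁻¹ ^ 2) *ᵥ ((-A) *ᵥ 1))) ≤ 0 := by
    intro μ hμ
    rw [neg_nonpos, sq, ← mulVec_mulVec]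
    exact dotProduct_nonneg_of_nonneg hα0
      (hA.inv_mulVec_nonneg hμ (hA.inv_mulVec_nonneg hμ hA.neg_mulVec_one_nonneg))
  refine ⟨fun μ hμ => ⟨hderiv μ hμ, hnonpos μ hμ⟩, ?_⟩
  exact antitoneOn_of_hasDerivWithinAt_nonpos (convex_Ioi 0)
    (fun μ hμ => (hderiv μ hμ).continuousAt.continuousWithinAt)
    (fun μ hμ => (hderiv μ (by rwa [interior_Ioi] at hμ)).hasDerivWithinAt)
    (fun μ hμ => hnonpos μ (by rwa [interior_Ioi] at hμ))

/-- **Differentiability and monotonicity of `τ`.**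
For a sub-generator matrix `A` and probability vector `α`, the map
`μ ↦ τ(μ) = αᵀ (μI − A)⁻¹ ((−A)𝟙)` is differentiable at every `μ > 0` with
derivative `−αᵀ ((μI − A)⁻¹)² ((−A)𝟙)`; this derivative is nonpositive, and
consequently `τ` is antitone on `(0, ∞)`. -/
theorem tau_hasDerivAt_and_antitoneOn
    (n : ℕ) (hn : 1 ≤ n) (A : Matrix (Fin n) (Fin n) ℝ)
    (hoff : ∀ i j, i ≠ j → 0 ≤ A i j)
    (hrow : ∀ i, ∑ j, A i j ≤ 0)
    (α : Fin n → ℝ) (hα0 : ∀ i, 0 ≤ α i) (hα1 : ∑ i, α i = 1) :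
    (∀ μ : ℝ, 0 < μ →
      HasDerivAt
        (fun t : ℝ => α ⬝ᵥ ((t • (1 : Matrix (Fin n) (Fin n) ℝ) - A)⁻¹ *ᵥ ((-A) *ᵥ (1 : Fin n → ℝ))))
        (-(α ⬝ᵥ ((((μ • (1 : Matrix (Fin n) (Fin n) ℝ) - A)⁻¹) ^ 2) *ᵥ ((-A) *ᵥ (1 : Fin n → ℝ))))) μ ∧
      -(α ⬝ᵥ ((((μ • (1 : Matrix (Fin n) (Fin n) ℝ) - A)⁻¹) ^ 2) *ᵥ ((-A) *ᵥ (1 : Fin n → ℝ)))) ≤ 0) ∧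
    AntitoneOn
      (fun μ : ℝ => α ⬝ᵥ ((μ • (1 : Matrix (Fin n) (Fin n) ℝ) - A)⁻¹ *ᵥ ((-A) *ᵥ (1 : Fin n → ℝ))))
      (Set.Ioi (0 : ℝ)) :=
  tau_hasDerivAt_and_antitoneOn_general n A hoff hrow α hα0
end

section
/- (Corollary 2.) Let n ≥ 1, let A be an n×n real sub-generator matrix, α ∈ ℝⁿ a probability vector, μ, γ_V, γ_R, ρ_J, μ_J > 0 with τ = αᵀ(μI−A)⁻¹((−A)𝟙) > 0, and let φ > 0. Consider the equilibrium equations (E1)–(E4) with the recruitment value in (E1) given by φ·V (i.e. φ·V − (ρ_J+μ_J)·J = 0). Then there exists a solution (J, B, V, R) with V > 0 if and only if φ = ϱ, i.e. if and only if the basic offspring number N₀ = φ/ϱ equals 1. -/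
/-!
Equation (E2) says `(μI − A)ᵀ B = s α` with `s = ρ_J J + γ_R R`, so pairing it against
`(μI − A)⁻¹((−A)𝟙)` turns (E3) into the scalar balance `s τ = (γ_V + μ) V`; conversely, for
any `s` the vector `B = s (μI − A)⁻ᵀ α` solves (E2) and (E3) once that balance holds.
Eliminating `J` and `R` with (E1) and (E4) and dividing by `V > 0` leaves one linear equation
in `φ`, whose solution is `ϱ`.
-/

open Matrix

/-- The survival-and-exit probability `τ = αᵀ (μI − A)⁻¹ ((−A)𝟙)`. -/
noncomputable def tau {n : ℕ} (A : Matrix (Fin n) (Fin n) ℝ) (α : Fin n → ℝ) (μ : ℝ) : ℝ :=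
  α ⬝ᵥ ((μ • (1 : Matrix (Fin n) (Fin n) ℝ) - A)⁻¹ *ᵥ ((-A) *ᵥ (1 : Fin n → ℝ)))

/-- The average number of gonotrophic cycles `n_G`. -/
noncomputable def nG {n : ℕ} (A : Matrix (Fin n) (Fin n) ℝ) (α : Fin n → ℝ)
    (μ γV γR : ℝ) : ℝ :=
  (1 - tau A α μ * (γR / (μ + γR)) * (γV / (μ + γV)))⁻¹

/-- The threshold quantity `ϱ`. -/
noncomputable def varrho {n : ℕ} (A : Matrix (Fin n) (Fin n) ℝ) (α : Fin n → ℝ)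
    (μ γV γR ρJ μJ : ℝ) : ℝ :=
  (tau A α μ * (1 / (μ + γV)) * (ρJ / (ρJ + μJ)) * nG A α μ γV γR)⁻¹

theorem Matrix.exists_vecMul_eq_and_dotProduct_eq_iff {ι K : Type*} [Fintype ι] [DecidableEq ι]
    [Field K] {M : Matrix ι ι K} (hM : IsUnit M.det) (x w : ι → K) (d : K) :
    (∃ B, B ᵥ* M = x ∧ w ⬝ᵥ B = d) ↔ x ⬝ᵥ (M⁻¹ *ᵥ w) = d := by
  have hsol : ∀ B, B ᵥ* M = x ↔ B = x ᵥ* M⁻¹ := fun B => by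
    constructor
    · rintro rfl
      rw [vecMul_vecMul, mul_nonsing_inv _ hM, vecMul_one]
    · rintro rfl
      rw [vecMul_vecMul, nonsing_inv_mul _ hM, vecMul_one]
  simp only [hsol, exists_eq_left, dotProduct_mulVec, dotProduct_comm w]

theorem add_transpose_mulVec_sub_smul_eq_zero_iff {ι R : Type*} [Fintype ι] [DecidableEq ι]
    [CommRing R] (A : Matrix ι ι R) (μ : R) (x B : ι → R) :
    x + Aᵀ *ᵥ B - μ • B = 0 ↔ B ᵥ* (μ • (1 : Matrix ι ι R) - A) = x := by
  rw [vecMul_sub, vecMul_smul, vecMul_one, ← mulVec_transpose]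
  constructor <;> intro h <;> linear_combination (norm := module) -h

theorem isUnit_det_of_tau_ne_zero {n : ℕ} {A : Matrix (Fin n) (Fin n) ℝ} {α : Fin n → ℝ} {μ : ℝ}
    (hτ : tau A α μ ≠ 0) : IsUnit (μ • (1 : Matrix (Fin n) (Fin n) ℝ) - A).det := by
  by_contra hdet
  -- a singular matrix has the junk inverse `0`, which forces `τ = 0`
  simp [tau, nonsing_inv_apply_not_isUnit _ hdet] at hτ

theorem varrho_eq {n : ℕ} (A : Matrix (Fin n) (Fin n) ℝ) (α : Fin n → ℝ) {μ γV γR ρJ μJ : ℝ}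
    (hτ : tau A α μ ≠ 0) (hV : μ + γV ≠ 0) (hR : γR + μ ≠ 0) (hρJ : ρJ ≠ 0) :
    varrho A α μ γV γR ρJ μJ =
      (ρJ + μJ) / ρJ * ((μ + γV) / tau A α μ - γR * γV / (γR + μ)) := by
  rw [varrho, nG, mul_inv, inv_inv, add_comm μ γR]
  field_simp

theorem exists_positive_scalar_equilibrium_iff {t μ γV γR ρJ μJ φ : ℝ} (ht : t ≠ 0)
    (hρJ : ρJ ≠ 0) (hJ : ρJ + μJ ≠ 0) (hR : γR + μ ≠ 0) :
    (∃ J V R : ℝ, 0 < V ∧ φ * V - (ρJ + μJ) * J = 0 ∧ (ρJ * J + γR * R) * t = (γV + μ) * V ∧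
        γV * V - (γR + μ) * R = 0) ↔
      φ = (ρJ + μJ) / ρJ * ((μ + γV) / t - γR * γV / (γR + μ)) := by
  constructor
  · rintro ⟨J, V, R, hV, hE1, hbal, hE4⟩
    obtain rfl : J = φ * V / (ρJ + μJ) := by field_simp; linarith
    obtain rfl : R = γV * V / (γR + μ) := by field_simp; linarith
    have hφ : (ρJ * φ / (ρJ + μJ) + γR * γV / (γR + μ)) * t = γV + μ := by
      apply mul_right_cancel₀ hV.ne'
      linear_combination hbal
    field_simp at hφ ⊢
    linear_combination hφ
  · intro hφ
    refine ⟨φ / (ρJ + μJ), 1, γV / (γR + μ), one_pos, by field_simp; ring, ?_, by field_simp; ring⟩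
    subst hφ
    field_simp
    ring

theorem positive_equilibrium_iff_varrho_general
    (n : ℕ) (A : Matrix (Fin n) (Fin n) ℝ)
    (α : Fin n → ℝ)
    (μ γV γR ρJ μJ : ℝ)
    (hμ : 0 < μ) (hγV : 0 < γV) (hγR : 0 < γR) (hρJ : 0 < ρJ) (hμJ : 0 < μJ)
    (hτ : 0 < tau A α μ) (φ : ℝ) :
    (∃ (J V R : ℝ) (B : Fin n → ℝ), 0 < V ∧
        φ * V - (ρJ + μJ) * J = 0 ∧
        (ρJ * J + γR * R) • α + Aᵀ *ᵥ B - μ • B = 0 ∧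
        ((-A) *ᵥ (1 : Fin n → ℝ)) ⬝ᵥ B - (γV + μ) * V = 0 ∧
        γV * V - (γR + μ) * R = 0) ↔
      φ = varrho A α μ γV γR ρJ μJ := by
  have hdet := isUnit_det_of_tau_ne_zero hτ.ne'
  have hbalance : ∀ J V R : ℝ, (∃ B : Fin n → ℝ,
      (ρJ * J + γR * R) • α + Aᵀ *ᵥ B - μ • B = 0 ∧
        ((-A) *ᵥ (1 : Fin n → ℝ)) ⬝ᵥ B - (γV + μ) * V = 0) ↔
      (ρJ * J + γR * R) * tau A α μ = (γV + μ) * V := fun J V R => by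
    simp_rw [add_transpose_mulVec_sub_smul_eq_zero_iff, sub_eq_zero]
    rw [exists_vecMul_eq_and_dotProduct_eq_iff hdet, smul_dotProduct, smul_eq_mul, tau]
  rw [varrho_eq A α hτ.ne' (by positivity) (by positivity) hρJ.ne',
    ← exists_positive_scalar_equilibrium_iff hτ.ne' hρJ.ne' (by positivity) (by positivity)]
  refine exists_congr fun J => exists_congr fun V => exists_congr fun R => ?_
  rw [← hbalance]
  constructor
  · rintro ⟨B, hV, hE1, hE2, hE3, hE4⟩
    exact ⟨hV, hE1, ⟨B, hE2, hE3⟩, hE4⟩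
  · rintro ⟨hV, hE1, ⟨B, hE2, hE3⟩, hE4⟩
    exact ⟨B, hV, hE1, hE2, hE3, hE4⟩

/-- **Corollary 2.** For the per-capita recruitment function `φ(V,J) = φ·V`,
the equilibrium equations (E1)–(E4) (with recruitment value `φ·V` in (E1)) have
a solution with `V > 0` if and only if `φ = ϱ`, i.e. if and only if the basic
offspring number `N₀ = φ/ϱ` equals one. -/
theorem positive_equilibrium_iff_varrho
    (n : ℕ) (hn : 1 ≤ n) (A : Matrix (Fin n) (Fin n) ℝ)
    (hoff : ∀ i j, i ≠ j → 0 ≤ A i j)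
    (hrow : ∀ i, ∑ j, A i j ≤ 0)
    (α : Fin n → ℝ) (hα0 : ∀ i, 0 ≤ α i) (hα1 : ∑ i, α i = 1)
    (μ γV γR ρJ μJ : ℝ)
    (hμ : 0 < μ) (hγV : 0 < γV) (hγR : 0 < γR) (hρJ : 0 < ρJ) (hμJ : 0 < μJ)
    (hτ : 0 < tau A α μ) (φ : ℝ) (hφ : 0 < φ) :
    (∃ (J V R : ℝ) (B : Fin n → ℝ), 0 < V ∧
        φ * V - (ρJ + μJ) * J = 0 ∧
        (ρJ * J + γR * R) • α + Aᵀ *ᵥ B - μ • B = 0 ∧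
        ((-A) *ᵥ (1 : Fin n → ℝ)) ⬝ᵥ B - (γV + μ) * V = 0 ∧
        γV * V - (γR + μ) * R = 0) ↔
      φ = varrho A α μ γV γR ρJ μJ :=
  positive_equilibrium_iff_varrho_general n A α μ γV γR ρJ μJ hμ hγV hγR hρJ hμJ hτ φ
end
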